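/- arXiv:2501.01870 — 7 statements merged into one kernel-verified Lean document; each statement's English description precedes it below -/
import Mathlib

section
/- Let f(λ,μ) be a nonzero polynomial in ℂ[λ,μ] satisfying f(λ,μ) = −f(μ,λ), and write f_{ij} for the coefficient of λ^i μ^j in f. Then there exist polynomials P₁, P₂ ∈ ℂ[X] with P₁(λ)P₂(μ) − P₁(μ)P₂(λ) = f(λ,μ) if and only if f_{ij}f_{kl} − f_{ik}f_{jl} + f_{jk}f_{il} = 0 for all natural numbers i, j, k, l. -/
/-!
The coefficients of `wedge P Q = P(λ)Q(μ) − P(μ)Q(λ)` are the `2 × 2` minors `p_i q_j − p_j q_i`,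
which satisfy the Plücker relations identically. Conversely, if the `f_{ij}` satisfy the Plücker
relations and `c = f_{i₀j₀} ≠ 0`, the relation with `(k, l) = (i₀, j₀)` reads
`c f_{ij} = f_{ii₀} f_{jj₀} − f_{ji₀} f_{ij₀}`, so `f = wedge P Q` for the columns
`P = (f_{n i₀})ₙ` and `Q = c⁻¹ (f_{n j₀})ₙ` of the coefficient matrix.
-/

/-- Evaluation of a bivariate polynomial f(λ,μ) at a pair of complex numbers. -/
noncomputable def ev2 (f : MvPolynomial (Fin 2) ℂ) (x y : ℂ) : ℂ :=
  MvPolynomial.eval ![x, y] f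

/-- The coefficient f_{ij} of λ^i μ^j in a bivariate polynomial f(λ,μ). -/
noncomputable def coeff2 (f : MvPolynomial (Fin 2) ℂ) (i j : ℕ) : ℂ :=
  MvPolynomial.coeff (Finsupp.single 0 i + Finsupp.single 1 j) f

open Finsupp (single)

lemma Finsupp.single_zero_add_single_one_inj {i j k l : ℕ} :
    (single 0 i + single 1 j : Fin 2 →₀ ℕ) = single 0 k + single 1 l ↔ i = k ∧ j = l := by
  constructor
  · intro h
    exact ⟨by simpa using congr($h 0), by simpa using congr($h 1)⟩
  · rintro ⟨rfl, rfl⟩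
    rfl

lemma Finsupp.eq_single_zero_add_single_one (d : Fin 2 →₀ ℕ) :
    d = single 0 (d 0) + single 1 (d 1) := by
  ext x
  fin_cases x <;> simp

namespace Polynomial

section CommSemiring

variable {R : Type*} [CommSemiring R]

lemma toMvPolynomial_monomial {σ : Type*} (i : σ) (n : ℕ) (a : R) :
    (monomial n a).toMvPolynomial i = MvPolynomial.monomial (single i n) a := by
  rw [← C_mul_X_pow_eq_monomial, map_mul, map_pow, toMvPolynomial_C, toMvPolynomial_X,
    MvPolynomial.C_mul_X_pow_eq_monomial]

lemma coeff_toMvPolynomial_zero_mul_toMvPolynomial_one (P Q : R[X]) (i j : ℕ) :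
    (P.toMvPolynomial (0 : Fin 2) * Q.toMvPolynomial 1).coeff (single 0 i + single 1 j) =
      P.coeff i * Q.coeff j := by
  induction P using Polynomial.induction_on' with
  | add P₁ P₂ h₁ h₂ => simp only [map_add, add_mul, MvPolynomial.coeff_add, coeff_add, h₁, h₂]
  | monomial n a =>
    induction Q using Polynomial.induction_on' with
    | add Q₁ Q₂ h₁ h₂ => simp only [map_add, mul_add, MvPolynomial.coeff_add, coeff_add, h₁, h₂]
    | monomial m b =>
      rw [toMvPolynomial_monomial, toMvPolynomial_monomial, MvPolynomial.monomial_mul,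
        MvPolynomial.coeff_monomial, coeff_monomial, coeff_monomial]
      simp only [Finsupp.single_zero_add_single_one_inj]
      by_cases hn : n = i <;> by_cases hm : m = j <;> simp [hn, hm]

end CommSemiring

variable {R : Type*} [CommRing R]

noncomputable def wedge (P Q : R[X]) : MvPolynomial (Fin 2) R :=
  P.toMvPolynomial 0 * Q.toMvPolynomial 1 - P.toMvPolynomial 1 * Q.toMvPolynomial 0

lemma coeff_wedge (P Q : R[X]) (i j : ℕ) :
    (wedge P Q).coeff (single 0 i + single 1 j) =
      P.coeff i * Q.coeff j - P.coeff j * Q.coeff i := by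
  rw [wedge, MvPolynomial.coeff_sub, mul_comm (P.toMvPolynomial 1),
    coeff_toMvPolynomial_zero_mul_toMvPolynomial_one,
    coeff_toMvPolynomial_zero_mul_toMvPolynomial_one]
  ring

lemma eval_wedge (P Q : R[X]) (v : Fin 2 → R) :
    MvPolynomial.eval v (wedge P Q) =
      P.eval (v 0) * Q.eval (v 1) - P.eval (v 1) * Q.eval (v 0) := by
  simp only [wedge, map_sub, map_mul, MvPolynomial.eval_toMvPolynomial]

end Polynomial

open Polynomial

lemma ev2_wedge (P Q : ℂ[X]) (l m : ℂ) :
    ev2 (wedge P Q) l m = P.eval l * Q.eval m - P.eval m * Q.eval l :=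
  eval_wedge P Q ![l, m]

lemma coeff2_wedge (P Q : ℂ[X]) (i j : ℕ) :
    coeff2 (wedge P Q) i j = P.coeff i * Q.coeff j - P.coeff j * Q.coeff i :=
  coeff_wedge P Q i j

lemma ext_ev2 {f g : MvPolynomial (Fin 2) ℂ} (h : ∀ l m, ev2 f l m = ev2 g l m) : f = g := by
  refine MvPolynomial.funext fun v => ?_
  have hv : ![v 0, v 1] = v := by
    funext k
    fin_cases k <;> rfl
  simpa only [ev2, hv] using h (v 0) (v 1)

lemma ext_coeff2 {f g : MvPolynomial (Fin 2) ℂ} (h : ∀ i j, coeff2 f i j = coeff2 g i j) :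
    f = g := by
  ext d
  rw [Finsupp.eq_single_zero_add_single_one d]
  exact h _ _

lemma coeff2_eq_zero_of_totalDegree_lt {f : MvPolynomial (Fin 2) ℂ} {i j : ℕ}
    (h : f.totalDegree < i + j) : coeff2 f i j = 0 :=
  MvPolynomial.coeff_eq_zero_of_totalDegree_lt <| by
    rwa [← Finsupp.degree_apply, map_add, Finsupp.degree_single, Finsupp.degree_single]

noncomputable def column (f : MvPolynomial (Fin 2) ℂ) (j : ℕ) : ℂ[X] :=
  ∑ n ∈ Finset.range (f.totalDegree + 1), monomial n (coeff2 f n j)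

lemma coeff_column (f : MvPolynomial (Fin 2) ℂ) (j n : ℕ) :
    (column f j).coeff n = coeff2 f n j := by
  simp only [column, finsetSum_coeff, coeff_monomial, Finset.sum_ite_eq', Finset.mem_range]
  split_ifs with hn
  · rfl
  · exact (coeff2_eq_zero_of_totalDegree_lt (by omega)).symm

def PluckerRelations (f : MvPolynomial (Fin 2) ℂ) : Prop :=
  ∀ i j k l : ℕ, coeff2 f i j * coeff2 f k l - coeff2 f i k * coeff2 f j l
    + coeff2 f j k * coeff2 f i l = 0

lemma pluckerRelations_wedge (P Q : ℂ[X]) : PluckerRelations (wedge P Q) := by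
  intro i j k l
  simp only [coeff2_wedge]
  ring

lemma exists_wedge_eq_of_pluckerRelations {f : MvPolynomial (Fin 2) ℂ}
    (hf : PluckerRelations f) : ∃ P Q : ℂ[X], wedge P Q = f := by
  by_cases hzero : f = 0
  · exact ⟨0, 0, by simp [hzero, wedge]⟩
  obtain ⟨i₀, j₀, hc⟩ : ∃ i₀ j₀, coeff2 f i₀ j₀ ≠ 0 := by
    by_contra! h
    exact hzero (ext_coeff2 fun i j => h i j)
  refine ⟨column f i₀, C (coeff2 f i₀ j₀)⁻¹ * column f j₀, ext_coeff2 fun i j => ?_⟩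
  rw [coeff2_wedge, coeff_C_mul, coeff_C_mul, coeff_column, coeff_column, coeff_column,
    coeff_column]
  field_simp
  linear_combination -hf i j i₀ j₀

theorem stmt_4_general (f : MvPolynomial (Fin 2) ℂ) :
    (∃ P₁ P₂ : Polynomial ℂ, ∀ l m : ℂ,
        P₁.eval l * P₂.eval m - P₁.eval m * P₂.eval l = ev2 f l m) ↔
    (∀ i j k l : ℕ,
      coeff2 f i j * coeff2 f k l - coeff2 f i k * coeff2 f j l
        + coeff2 f j k * coeff2 f i l = 0) := by
  constructor
  · rintro ⟨P₁, P₂, h⟩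
    obtain rfl : wedge P₁ P₂ = f := ext_ev2 fun l m => by rw [ev2_wedge, h]
    exact pluckerRelations_wedge P₁ P₂
  · intro hf
    obtain ⟨P₁, P₂, rfl⟩ := exists_wedge_eq_of_pluckerRelations hf
    exact ⟨P₁, P₂, fun l m => (ev2_wedge P₁ P₂ l m).symm⟩

/-- For a nonzero antisymmetric polynomial f(λ,μ), there exist polynomials
P₁, P₂ with P₁(λ)P₂(μ) − P₁(μ)P₂(λ) = f(λ,μ) iff the Plücker-type relations
f_{ij}f_{kl} − f_{ik}f_{jl} + f_{jk}f_{il} = 0 hold for all i, j, k, l. -/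
theorem stmt_4 (f : MvPolynomial (Fin 2) ℂ) (hf : f ≠ 0)
    (hskew : ∀ l m : ℂ, ev2 f l m = - ev2 f m l) :
    (∃ P₁ P₂ : Polynomial ℂ, ∀ l m : ℂ,
        P₁.eval l * P₂.eval m - P₁.eval m * P₂.eval l = ev2 f l m) ↔
    (∀ i j k l : ℕ,
      coeff2 f i j * coeff2 f k l - coeff2 f i k * coeff2 f j l
        + coeff2 f j k * coeff2 f i l = 0) :=
  stmt_4_general f
end

section
/- Let f(λ,μ) be a nonzero polynomial in ℂ[λ,μ] with f(λ,μ) = −f(μ,λ), whose coefficients f_{ij} (the coefficient of λ^i μ^j) satisfy f_{ij}f_{kl} − f_{ik}f_{jl} + f_{jk}f_{il} = 0 for all i, j, k, l. Fix indices i₀ < j₀ with f_{i₀ j₀} ≠ 0 and define P₁(λ) = Σ_k f_{k, j₀} λ^k and P₂(λ) = −(1/f_{i₀ j₀}) Σ_k f_{k, i₀} λ^k. Then for a polynomial a ∈ ℂ[λ] with coefficients a_k, the equation a(λ)b(μ) − a(μ)b(λ) = f(λ,μ) has a solution b ∈ ℂ[λ] if and only if a(λ) = (a_{i₀}/f_{i₀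 j₀})·P₁(λ) + a_{j₀}·P₂(λ) and (a_{i₀}, a_{j₀}) ≠ (0,0). -/
/-- Embedding of a pair of univariate polynomials as p(λ)q(μ). -/
noncomputable def emb (p q : Polynomial ℂ) : MvPolynomial (Fin 2) ℂ :=
  Polynomial.aeval (MvPolynomial.X 0) p * Polynomial.aeval (MvPolynomial.X 1) q

lemma ev2_emb (p q : Polynomial ℂ) (x y : ℂ) : ev2 (emb p q) x y = p.eval x * q.eval y := by
  simp [ev2, emb, Polynomial.aeval_def, Polynomial.eval₂_eq_sum_range, map_sum,
    ← Polynomial.eval_eq_sum_range]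

lemma fin2_decomp (d : Fin 2 →₀ ℕ) : d = Finsupp.single 0 (d 0) + Finsupp.single 1 (d 1) := by
  ext x
  fin_cases x <;> simp

lemma fs_eq (i j k l : ℕ) :
    (Finsupp.single (0:Fin 2) i + Finsupp.single 1 j = Finsupp.single 0 k + Finsupp.single 1 l)
      ↔ (i = k ∧ j = l) := by
  constructor
  · intro h
    constructor
    · have := DFunLike.congr_fun h 0; simpa using this
    · have := DFunLike.congr_fun h 1; simpa using this
  · rintro ⟨rfl, rfl⟩; rfl

lemma coeff2_emb (p q : Polynomial ℂ) (i j : ℕ) :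
    coeff2 (emb p q) i j = p.coeff i * q.coeff j := by
  induction p using Polynomial.induction_on' with
  | add p p' hp hp' =>
    simp only [emb, map_add, add_mul, coeff2, MvPolynomial.coeff_add] at *
    rw [hp, hp', Polynomial.coeff_add]; ring
  | monomial n c =>
    induction q using Polynomial.induction_on' with
    | add q q' hq hq' =>
      simp only [emb, map_add, mul_add, coeff2, MvPolynomial.coeff_add] at *
      rw [hq, hq', Polynomial.coeff_add]; ring
    | monomial m d =>
      simp only [emb, Polynomial.aeval_monomial, coeff2, Polynomial.coeff_monomial]
      have : (algebraMap ℂ (MvPolynomial (Fin 2) ℂ)) c * MvPolynomial.X 0 ^ n *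
          ((algebraMap ℂ (MvPolynomial (Fin 2) ℂ)) d * MvPolynomial.X 1 ^ m)
          = MvPolynomial.monomial (Finsupp.single 0 n + Finsupp.single 1 m) (c * d) := by
        rw [MvPolynomial.monomial_eq]
        simp [MvPolynomial.algebraMap_eq, Finsupp.prod_add_index, Finsupp.prod_single_index]
        ring
      rw [this, MvPolynomial.coeff_monomial, if_congr (fs_eq n m i j) rfl rfl]
      by_cases h1 : n = i <;> by_cases h2 : m = j <;> simp [h1, h2]

lemma coeff2_sub (g h : MvPolynomial (Fin 2) ℂ) (i j : ℕ) :
    coeff2 (g - h) i j = coeff2 g i j - coeff2 h i j := by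
  simp [coeff2]

/-- with f nonzero antisymmetric satisfying the Plücker-type relations,
i₀ < j₀ with f_{i₀ j₀} ≠ 0, P₁(λ) = Σ_k f_{k,j₀} λ^k and
P₂(λ) = −(1/f_{i₀ j₀}) Σ_k f_{k,i₀} λ^k, the equation a(λ)b(μ) − a(μ)b(λ) = f(λ,μ) has
a solution b iff a = (a_{i₀}/f_{i₀ j₀})·P₁ + a_{j₀}·P₂ and (a_{i₀}, a_{j₀}) ≠ (0,0). -/
theorem stmt_6 (f : MvPolynomial (Fin 2) ℂ) (hf : f ≠ 0)
    (hskew : ∀ l m : ℂ, ev2 f l m = - ev2 f m l)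
    (hpluecker : ∀ i j k l : ℕ,
      coeff2 f i j * coeff2 f k l - coeff2 f i k * coeff2 f j l
        + coeff2 f j k * coeff2 f i l = 0)
    (i₀ j₀ : ℕ) (hij : i₀ < j₀) (hne : coeff2 f i₀ j₀ ≠ 0)
    (P₁ P₂ : Polynomial ℂ)
    (hP₁ : ∀ k : ℕ, P₁.coeff k = coeff2 f k j₀)
    (hP₂ : ∀ k : ℕ, P₂.coeff k = -(1 / coeff2 f i₀ j₀) * coeff2 f k i₀)
    (a : Polynomial ℂ) :
    (∃ b : Polynomial ℂ, ∀ l m : ℂ,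
        a.eval l * b.eval m - a.eval m * b.eval l = ev2 f l m) ↔
    (a = Polynomial.C (a.coeff i₀ / coeff2 f i₀ j₀) * P₁ + Polynomial.C (a.coeff j₀) * P₂
      ∧ ¬(a.coeff i₀ = 0 ∧ a.coeff j₀ = 0)) := by
  have hdecomp : f = emb P₁ P₂ - emb P₂ P₁ := by
    apply MvPolynomial.ext
    intro d
    have hd := fin2_decomp d
    rw [hd]
    show coeff2 f (d 0) (d 1) = MvPolynomial.coeff _ (emb P₁ P₂ - emb P₂ P₁)
    rw [show MvPolynomial.coeff (Finsupp.single 0 (d 0) + Finsupp.single 1 (d 1))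
        (emb P₁ P₂ - emb P₂ P₁) = coeff2 (emb P₁ P₂ - emb P₂ P₁) (d 0) (d 1) from rfl,
      coeff2_sub, coeff2_emb, coeff2_emb, hP₁, hP₁, hP₂, hP₂]
    have hp := hpluecker (d 0) (d 1) i₀ j₀
    have key : coeff2 f (d 0) (d 1)
        = (coeff2 f (d 0) i₀ * coeff2 f (d 1) j₀ - coeff2 f (d 1) i₀ * coeff2 f (d 0) j₀)
          / coeff2 f i₀ j₀ := by
      rw [eq_div_iff hne]; linear_combination hp
    rw [key]
    field_simp
    ring
  have hF : ∀ l m : ℂ, ev2 f l m = P₁.eval l * P₂.eval m - P₂.eval l * P₁.eval m := by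
    intro l m
    rw [hdecomp]
    show MvPolynomial.eval _ _ = _
    rw [map_sub]
    exact congrArg₂ (· - ·) (ev2_emb P₁ P₂ l m) (ev2_emb P₂ P₁ l m)
  constructor
  · rintro ⟨b, hb⟩
    have hfeq : f = emb a b - emb b a := by
      apply MvPolynomial.funext
      intro x
      have hx : ![x 0, x 1] = x := by funext i; fin_cases i <;> rfl
      have h1 : MvPolynomial.eval x f = ev2 f (x 0) (x 1) := by rw [ev2, hx]
      have h2 : MvPolynomial.eval x (emb a b - emb b a)
          = ev2 (emb a b) (x 0) (x 1) - ev2 (emb b a) (x 0) (x 1) := by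
        rw [ev2, ev2, hx, map_sub]
      rw [h1, h2, ev2_emb, ev2_emb, ← hb (x 0) (x 1)]
      ring
    have hc : ∀ k l : ℕ, coeff2 f k l = a.coeff k * b.coeff l - b.coeff k * a.coeff l := by
      intro k l
      rw [hfeq, coeff2_sub, coeff2_emb, coeff2_emb]
    have hD : a.coeff i₀ * b.coeff j₀ - b.coeff i₀ * a.coeff j₀ ≠ 0 := by
      rw [← hc i₀ j₀]; exact hne
    constructor
    · apply Polynomial.ext
      intro k
      rw [Polynomial.coeff_add, Polynomial.coeff_C_mul, Polynomial.coeff_C_mul,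
        hP₁, hP₂, hc k j₀, hc k i₀, hc i₀ j₀]
      field_simp
      ring
    · rintro ⟨h1, h2⟩
      apply hne
      rw [hc i₀ j₀, h1, h2]
      ring
  · rintro ⟨ha, h0⟩
    obtain ⟨α, hα'⟩ : ∃ α, a.coeff i₀ = α := ⟨_, rfl⟩
    obtain ⟨β, hβ'⟩ : ∃ β, a.coeff j₀ = β := ⟨_, rfl⟩
    rw [hα', hβ'] at ha h0
    have hEa : ∀ x : ℂ, a.eval x
        = (α / coeff2 f i₀ j₀) * P₁.eval x + β * P₂.eval x := by
      intro x
      rw [ha]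
      simp
    by_cases hα0 : α = 0
    · have hβ0 : β ≠ 0 := fun h => h0 ⟨hα0, h⟩
      refine ⟨Polynomial.C (-(1 / β)) * P₁, fun l m => ?_⟩
      rw [hF l m, hEa l, hEa m]
      simp only [Polynomial.eval_mul, Polynomial.eval_C, hα0]
      field_simp
      ring
    · refine ⟨Polynomial.C (coeff2 f i₀ j₀ / α) * P₂, fun l m => ?_⟩
      rw [hF l m, hEa l, hEa m]
      simp only [Polynomial.eval_mul, Polynomial.eval_C]
      field_simp
      ring
end

section
/- Let f(λ,μ) be a nonzero polynomial in ℂ[λ,μ] with f(λ,μ) = −f(μ,λ), whose coefficients f_{ij} satisfy f_{ij}f_{kl} − f_{ik}f_{jl} + f_{jk}f_{il} = 0 for all i, j, k, l. Fix i₀ < j₀ with f_{i₀ j₀} ≠ 0 and define P₁(λ) = Σ_k f_{k, j₀} λ^k and P₂(λ) = −(1/f_{i₀ j₀}) Σ_k f_{k, i₀} λ^k. Suppose a ∈ ℂ[λ] satisfies a(λ) = (a_{i₀}/f_{i₀ j₀})·P₁(λ) + a_{j₀}·P₂(λ) with a_{i₀} ≠ 0. Then a polynomial b ∈ ℂ[λ]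 satisfies a(λ)b(μ) − a(μ)b(λ) = f(λ,μ) if and only if b(λ) = k·a(λ) + (f_{i₀ j₀}/a_{i₀})·P₂(λ) for some k ∈ ℂ. -/
/-!
Antisymmetry and the Plücker relation for the indices `i₀, j₀, i, j` give
`f_{ij} = P₁_i P₂_j - P₁_j P₂_i`, i.e. `f(λ,μ) = P₁(λ)P₂(μ) - P₁(μ)P₂(λ)`. Since
`(a, b) ↦ a(λ)b(μ) - a(μ)b(λ)` is bilinear and alternating, `b₀ = (f_{i₀j₀}/a_{i₀}) P₂` is a
solution, and the solutions are `b₀` plus the `b` with `a(λ)b(μ) = a(μ)b(λ)`, which for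
`a ≠ 0` are exactly the multiples of `a`.
-/

open Polynomial Finset

theorem coeff2_antisymm {f : MvPolynomial (Fin 2) ℂ}
    (hskew : ∀ l m : ℂ, ev2 f l m = -ev2 f m l) (i j : ℕ) :
    coeff2 f j i = -coeff2 f i j := by
  have hswap : MvPolynomial.rename (Equiv.swap (0 : Fin 2) 1) f = -f := by
    refine MvPolynomial.funext fun x => ?_
    have hx : x = ![x 0, x 1] := by ext k; fin_cases k <;> rfl
    have hxσ : x ∘ Equiv.swap (0 : Fin 2) 1 = ![x 1, x 0] := by ext k; fin_cases k <;> simp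
    rw [MvPolynomial.eval_rename, hxσ, map_neg, hx]
    exact hskew (x 1) (x 0)
  have hd : Finsupp.mapDomain (Equiv.swap (0 : Fin 2) 1)
      (Finsupp.single 0 i + Finsupp.single 1 j) = Finsupp.single 0 j + Finsupp.single 1 i := by
    simp [Finsupp.mapDomain_add, Finsupp.mapDomain_single, add_comm]
  have h := MvPolynomial.coeff_rename_mapDomain _ (Equiv.swap (0 : Fin 2) 1).injective f
    (Finsupp.single 0 i + Finsupp.single 1 j)
  rw [hd, hswap, MvPolynomial.coeff_neg] at h
  exact neg_eq_iff_eq_neg.mp h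

theorem ev2_eq_sum_range (f : MvPolynomial (Fin 2) ℂ) {N : ℕ} (hN : f.totalDegree < N)
    (x y : ℂ) :
    ev2 f x y = ∑ i ∈ range N, ∑ j ∈ range N, coeff2 f i j * x ^ i * y ^ j := by
  set e : ℕ × ℕ → Fin 2 →₀ ℕ := fun p => Finsupp.single 0 p.1 + Finsupp.single 1 p.2
  have he : Function.Injective e := fun p q h => by
    have h0 := DFunLike.congr_fun h 0
    have h1 := DFunLike.congr_fun h 1
    simp only [e, Finsupp.add_apply, Finsupp.single_apply] at h0 h1
    exact Prod.ext (by simpa using h0) (by simpa using h1)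
  have hsupp : f.support ⊆ (range N ×ˢ range N).image e := by
    intro d hd
    have hdeg := MvPolynomial.le_totalDegree hd
    rw [Finsupp.sum_fintype _ _ fun _ => rfl, Fin.sum_univ_two] at hdeg
    refine mem_image.mpr ⟨(d 0, d 1), by simp only [mem_product, mem_range]; omega, ?_⟩
    ext k; fin_cases k <;> simp [e]
  rw [ev2, MvPolynomial.eval_eq', sum_subset hsupp, sum_image he.injOn, sum_product]
  · simp [e, coeff2, Fin.prod_univ_two, mul_assoc]
  · intro d _ hd
    rw [MvPolynomial.notMem_support_iff.mp hd, zero_mul]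

theorem ev2_eq_of_coeff2_eq {f : MvPolynomial (Fin 2) ℂ} {p q : ℂ[X]}
    (h : ∀ i j, coeff2 f i j = p.coeff i * q.coeff j - p.coeff j * q.coeff i) (x y : ℂ) :
    ev2 f x y = p.eval x * q.eval y - p.eval y * q.eval x := by
  set N := f.totalDegree + p.natDegree + q.natDegree + 1
  rw [ev2_eq_sum_range f (N := N) (by omega),
    eval_eq_sum_range' (n := N) (by omega) x, eval_eq_sum_range' (n := N) (by omega) y,
    eval_eq_sum_range' (n := N) (by omega) x, eval_eq_sum_range' (n := N) (by omega) y,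
    sum_mul_sum, sum_mul_sum, sum_comm (s := range N) (t := range N)
      (f := fun i j => p.coeff i * y ^ i * (q.coeff j * x ^ j)), ← sum_sub_distrib]
  refine sum_congr rfl fun i _ => ?_
  rw [← sum_sub_distrib]
  refine sum_congr rfl fun j _ => ?_
  rw [h]
  ring

theorem eq_mul_sub_mul_of_pluecker {K ι : Type*} [Field K] (F : ι → ι → K)
    (hanti : ∀ i j, F j i = -F i j)
    (hpluecker : ∀ i j k l, F i j * F k l - F i k * F j l + F j k * F i l = 0)
    {i₀ j₀ : ι} (hne : F i₀ j₀ ≠ 0) (i j : ι) :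
    F i j = F i j₀ * (-(1 / F i₀ j₀) * F j i₀) - F j j₀ * (-(1 / F i₀ j₀) * F i i₀) := by
  rw [hanti i₀ i, hanti i₀ j, hanti j₀ j, hanti j₀ i]
  field_simp
  linear_combination hpluecker i₀ j₀ i j

theorem Polynomial.eval_mul_eval_comm_iff {K : Type*} [Field K] [Infinite K] {a b : K[X]}
    (ha : a ≠ 0) :
    (∀ l m, a.eval l * b.eval m = a.eval m * b.eval l) ↔ ∃ k, b = C k * a := by
  constructor
  · intro h
    obtain ⟨m, hm⟩ : ∃ m, a.eval m ≠ 0 := by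
      by_contra! h0
      exact ha (Polynomial.funext fun x => by simp [h0 x])
    refine ⟨b.eval m / a.eval m, Polynomial.funext fun l => ?_⟩
    rw [eval_mul, eval_C]
    field_simp
    linear_combination -h l m
  · rintro ⟨k, rfl⟩ l m
    simp only [eval_mul, eval_C]
    ring

theorem stmt_7_general (f : MvPolynomial (Fin 2) ℂ)
    (hskew : ∀ l m : ℂ, ev2 f l m = - ev2 f m l)
    (hpluecker : ∀ i j k l : ℕ,
      coeff2 f i j * coeff2 f k l - coeff2 f i k * coeff2 f j l
        + coeff2 f j k * coeff2 f i l = 0)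
    (i₀ j₀ : ℕ) (hne : coeff2 f i₀ j₀ ≠ 0)
    (P₁ P₂ : Polynomial ℂ)
    (hP₁ : ∀ k : ℕ, P₁.coeff k = coeff2 f k j₀)
    (hP₂ : ∀ k : ℕ, P₂.coeff k = -(1 / coeff2 f i₀ j₀) * coeff2 f k i₀)
    (a : Polynomial ℂ)
    (ha : a = Polynomial.C (a.coeff i₀ / coeff2 f i₀ j₀) * P₁ + Polynomial.C (a.coeff j₀) * P₂)
    (hai : a.coeff i₀ ≠ 0)
    (b : Polynomial ℂ) :
    (∀ l m : ℂ, a.eval l * b.eval m - a.eval m * b.eval l = ev2 f l m) ↔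
    (∃ k : ℂ, b = Polynomial.C k * a + Polynomial.C (coeff2 f i₀ j₀ / a.coeff i₀) * P₂) := by
  set c := coeff2 f i₀ j₀
  have hcoeff : ∀ i j, coeff2 f i j = P₁.coeff i * P₂.coeff j - P₁.coeff j * P₂.coeff i := by
    intro i j
    rw [hP₁, hP₁, hP₂, hP₂]
    exact eq_mul_sub_mul_of_pluecker (coeff2 f) (fun i j => coeff2_antisymm hskew i j) hpluecker hne i j
  set b₀ := C (c / a.coeff i₀) * P₂
  have hb₀ : ∀ l m, a.eval l * b₀.eval m - a.eval m * b₀.eval l = ev2 f l m := by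
    intro l m
    rw [ev2_eq_of_coeff2_eq hcoeff, ha]
    simp only [b₀, eval_add, eval_mul, eval_C]
    field_simp
    ring
  have ha0 : a ≠ 0 := by
    rintro rfl
    exact hai (coeff_zero i₀)
  calc (∀ l m, a.eval l * b.eval m - a.eval m * b.eval l = ev2 f l m)
      ↔ ∀ l m, a.eval l * (b - b₀).eval m = a.eval m * (b - b₀).eval l := by
        refine forall₂_congr fun l m => ?_
        rw [← hb₀, eval_sub, eval_sub]
        constructor <;> intro h <;> linear_combination h
    _ ↔ ∃ k, b - b₀ = C k * a := eval_mul_eval_comm_iff ha0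
    _ ↔ ∃ k, b = C k * a + b₀ := by simp only [sub_eq_iff_eq_add]

/-- in the setting of STATEMENT 6, if a = (a_{i₀}/f_{i₀ j₀})·P₁ + a_{j₀}·P₂
with a_{i₀} ≠ 0, then b solves a(λ)b(μ) − a(μ)b(λ) = f(λ,μ) iff
b = k·a + (f_{i₀ j₀}/a_{i₀})·P₂ for some k ∈ ℂ. -/
theorem stmt_7 (f : MvPolynomial (Fin 2) ℂ) (hf : f ≠ 0)
    (hskew : ∀ l m : ℂ, ev2 f l m = - ev2 f m l)
    (hpluecker : ∀ i j k l : ℕ,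
      coeff2 f i j * coeff2 f k l - coeff2 f i k * coeff2 f j l
        + coeff2 f j k * coeff2 f i l = 0)
    (i₀ j₀ : ℕ) (hij : i₀ < j₀) (hne : coeff2 f i₀ j₀ ≠ 0)
    (P₁ P₂ : Polynomial ℂ)
    (hP₁ : ∀ k : ℕ, P₁.coeff k = coeff2 f k j₀)
    (hP₂ : ∀ k : ℕ, P₂.coeff k = -(1 / coeff2 f i₀ j₀) * coeff2 f k i₀)
    (a : Polynomial ℂ)
    (ha : a = Polynomial.C (a.coeff i₀ / coeff2 f i₀ j₀) * P₁ + Polynomial.C (a.coeff j₀) * P₂)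
    (hai : a.coeff i₀ ≠ 0)
    (b : Polynomial ℂ) :
    (∀ l m : ℂ, a.eval l * b.eval m - a.eval m * b.eval l = ev2 f l m) ↔
    (∃ k : ℂ, b = Polynomial.C k * a + Polynomial.C (coeff2 f i₀ j₀ / a.coeff i₀) * P₂) :=
  stmt_7_general f hskew hpluecker i₀ j₀ hne P₁ P₂ hP₁ hP₂ a ha hai b
end

section
/- Let η ∈ ℂ and let φ_A, φ_B ∈ ℂ[λ] be polynomials which are not both zero. Suppose f(∂,λ), g(∂,λ) ∈ ℂ[∂,λ] and h(∂) ∈ ℂ[∂] satisfy (∂ + λ − η)·f(∂,λ) = h(∂+λ)·φ_A(λ) and (∂ + λ − η)·g(∂,λ) = h(∂+λ)·φ_B(λ) for all ∂, λ ∈ ℂ. Then there exists a polynomial φ ∈ ℂ[X] such that h(∂) = (∂ − η)·φ(∂), f(∂,λ) = φ(∂+λ)·φ_A(λ) and g(∂,λ) = φ(∂+λ)·φ_B(λ). -/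
lemma ev2_continuous (f : MvPolynomial (Fin 2) ℂ) (l : ℂ) :
    Continuous fun x : ℂ => ev2 f x l := by
  have hc : Continuous fun x : ℂ => (![x, l] : Fin 2 → ℂ) := by
    apply continuous_pi
    intro i
    fin_cases i
    · exact continuous_id
    · exact continuous_const
  show Continuous fun x : ℂ => MvPolynomial.eval ![x, l] f
  exact (MvPolynomial.continuous_eval f).comp hc

lemma cancel_key (η : ℂ) (phiA : Polynomial ℂ) (f : MvPolynomial (Fin 2) ℂ)
    (φ : Polynomial ℂ)
    (key : ∀ x l : ℂ, (x + l - η) * ev2 f x l = (x + l - η) * (φ.eval (x + l) * phiA.eval l)) :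
    ∀ x l : ℂ, ev2 f x l = φ.eval (x + l) * phiA.eval l := by
  intro x l
  have hd : Dense ({η - l}ᶜ : Set ℂ) := dense_compl_singleton _
  have hc1 : Continuous fun x : ℂ => ev2 f x l := ev2_continuous f l
  have hc2 : Continuous fun x : ℂ => φ.eval (x + l) * phiA.eval l := by
    exact ((φ.continuous.comp (continuous_id.add continuous_const)).mul continuous_const)
  have := Continuous.ext_on hd hc1 hc2 (fun y hy => by
    have hne : y + l - η ≠ 0 := by
      intro hz
      apply hy
      simp only [Set.mem_singleton_iff]
      linear_combination hz
    exact mul_left_cancel₀ hne (key y l))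
  exact congrFun this x

/-- if φ_A, φ_B are not both zero and
(∂ + λ − η)·f(∂,λ) = h(∂+λ)·φ_A(λ), (∂ + λ − η)·g(∂,λ) = h(∂+λ)·φ_B(λ), then there
is a polynomial φ with h(∂) = (∂ − η)·φ(∂), f(∂,λ) = φ(∂+λ)·φ_A(λ),
g(∂,λ) = φ(∂+λ)·φ_B(λ). -/
theorem stmt_10 (η : ℂ) (phiA phiB : Polynomial ℂ) (hAB : ¬(phiA = 0 ∧ phiB = 0))
    (f g : MvPolynomial (Fin 2) ℂ) (h : Polynomial ℂ)
    (hf : ∀ x l : ℂ, (x + l - η) * ev2 f x l = h.eval (x + l) * phiA.eval l)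
    (hg : ∀ x l : ℂ, (x + l - η) * ev2 g x l = h.eval (x + l) * phiB.eval l) :
    ∃ φ : Polynomial ℂ,
      (∀ x : ℂ, h.eval x = (x - η) * φ.eval x) ∧
      (∀ x l : ℂ, ev2 f x l = φ.eval (x + l) * phiA.eval l) ∧
      (∀ x l : ℂ, ev2 g x l = φ.eval (x + l) * phiB.eval l) := by
  -- First: h.eval η = 0
  have hroot : h.eval η = 0 := by
    by_cases hA : phiA = 0
    · have hB : phiB ≠ 0 := fun hB => hAB ⟨hA, hB⟩
      obtain ⟨l, hl⟩ := phiB.exists_eval_ne_zero_of_natDegree_lt_card hB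
        ((Cardinal.nat_lt_aleph0 _).trans_le (Cardinal.infinite_iff.mp inferInstance))
      have := hg (η - l) l
      simp only [sub_add_cancel, sub_self, zero_mul] at this
      rcases mul_eq_zero.mp this.symm with h0 | h0
      · exact h0
      · exact absurd h0 hl
    · obtain ⟨l, hl⟩ := phiA.exists_eval_ne_zero_of_natDegree_lt_card hA
        ((Cardinal.nat_lt_aleph0 _).trans_le (Cardinal.infinite_iff.mp inferInstance))
      have := hf (η - l) l
      simp only [sub_add_cancel, sub_self, zero_mul] at this
      rcases mul_eq_zero.mp this.symm with h0 | h0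
      · exact h0
      · exact absurd h0 hl
  obtain ⟨φ, hφ⟩ := (Polynomial.dvd_iff_isRoot.mpr hroot : (Polynomial.X - Polynomial.C η) ∣ h)
  have hev : ∀ x : ℂ, h.eval x = (x - η) * φ.eval x := by
    intro x; rw [hφ]; simp [Polynomial.eval_mul]
  refine ⟨φ, hev, ?_, ?_⟩
  · exact cancel_key η phiA f φ (fun x l => by rw [hf x l, hev (x + l), mul_assoc])
  · exact cancel_key η phiB g φ (fun x l => by rw [hg x l, hev (x + l), mul_assoc])
end

section
/- Let α, β ∈ ℂ and let f(∂,λ) ∈ ℂ[∂,λ] satisfy f(∂+λ, 0)·(∂ + αλ + β) = f(∂,λ)·(∂ + λ + β) for all ∂, λ ∈ ℂ. If α = 1, then f(∂,λ) = q(∂+λ) where q(X) = f(X,0); if α ≠ 1, then there exists a polynomial s ∈ ℂ[X] such that f(∂,λ) = s(∂+λ)·(∂ + αλ + β). -/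
lemma eval_pl (f : MvPolynomial (Fin 2) ℂ) (l x : ℂ) :
    Polynomial.eval x (MvPolynomial.aeval ![Polynomial.X, Polynomial.C l] f) = ev2 f x l := by
  rw [ev2, MvPolynomial.aeval_def]
  rw [show Polynomial.eval x (MvPolynomial.eval₂ (algebraMap ℂ (Polynomial ℂ)) ![Polynomial.X, Polynomial.C l] f) = (Polynomial.evalRingHom x) (MvPolynomial.eval₂ (algebraMap ℂ (Polynomial ℂ)) ![Polynomial.X, Polynomial.C l] f) from rfl]
  rw [MvPolynomial.eval₂_comp_left (Polynomial.evalRingHom x)]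
  simp only [MvPolynomial.eval]
  congr 1
  · ext c; simp
  · funext i; fin_cases i <;> simp

lemma eq_on_compl (p q : Polynomial ℂ) (a : ℂ)
    (h : ∀ x, x ≠ a → p.eval x = q.eval x) (x : ℂ) : p.eval x = q.eval x := by
  have hpq : p = q := by
    apply Polynomial.eq_of_infinite_eval_eq
    exact ((Set.finite_singleton a).infinite_compl).mono (fun y hy => h y hy)
  rw [hpq]

/-- if f(∂+λ,0)·(∂ + αλ + β) = f(∂,λ)·(∂ + λ + β), then for α = 1 one has
f(∂,λ) = f(∂+λ,0), and for α ≠ 1 there is a polynomial s with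
f(∂,λ) = s(∂+λ)·(∂ + αλ + β). -/
theorem stmt_11 (α β : ℂ) (f : MvPolynomial (Fin 2) ℂ)
    (h : ∀ x l : ℂ, ev2 f (x + l) 0 * (x + α * l + β) = ev2 f x l * (x + l + β)) :
    (α = 1 → ∀ x l : ℂ, ev2 f x l = ev2 f (x + l) 0) ∧
    (α ≠ 1 → ∃ s : Polynomial ℂ, ∀ x l : ℂ,
      ev2 f x l = s.eval (x + l) * (x + α * l + β)) := by
  set q0 : Polynomial ℂ := MvPolynomial.aeval ![Polynomial.X, Polynomial.C 0] f with hq0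
  constructor
  · intro hα x l
    have key : ∀ y : ℂ, y ≠ -l - β →
        Polynomial.eval y (MvPolynomial.aeval ![Polynomial.X, Polynomial.C l] f)
          = Polynomial.eval y (q0.comp (Polynomial.X + Polynomial.C l)) := by
      intro y hy
      have hne : y + l + β ≠ 0 := fun hc => hy (by linear_combination hc)
      have := h y l
      rw [hα, one_mul] at this
      rw [eval_pl, Polynomial.eval_comp]
      simp only [Polynomial.eval_add, Polynomial.eval_X, Polynomial.eval_C]
      rw [eval_pl]
      exact (mul_right_cancel₀ hne this).symm
    have := eq_on_compl _ _ (-l - β) key x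
    rw [eval_pl, Polynomial.eval_comp] at this
    simp only [Polynomial.eval_add, Polynomial.eval_X, Polynomial.eval_C] at this
    rw [eval_pl] at this
    exact this
  · intro hα
    have hroot : q0.IsRoot (-β) := by
      have := h (1 - β) (-β - (1 - β))
      rw [show (1:ℂ) - β + (-β - (1 - β)) = -β by ring, show (-β:ℂ) + β = 0 by ring,
        mul_zero] at this
      have h4 : (1:ℂ) - β + α * (-β - (1 - β)) + β ≠ 0 := by
        rw [show (1:ℂ) - β + α * (-β - (1 - β)) + β = 1 - α by ring, sub_ne_zero]
        exact fun hc => hα hc.symm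
      have h5 : ev2 f (-β) 0 = 0 := by
        rcases mul_eq_zero.mp this with h | h
        · exact h
        · exact absurd h h4
      show q0.eval (-β) = 0
      rw [← eval_pl f 0 (-β)] at h5
      exact h5
    obtain ⟨s, hs⟩ := (Polynomial.dvd_iff_isRoot.mpr hroot)
    refine ⟨s, fun x l => ?_⟩
    have key : ∀ y : ℂ, y ≠ -l - β →
        Polynomial.eval y (MvPolynomial.aeval ![Polynomial.X, Polynomial.C l] f)
          = Polynomial.eval y (s.comp (Polynomial.X + Polynomial.C l)
              * (Polynomial.X + Polynomial.C (α * l + β))) := by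
      intro y hy
      have hne : y + l + β ≠ 0 := fun hc => hy (by linear_combination hc)
      have hh := h y l
      have hq : ev2 f (y + l) 0 = (y + l + β) * s.eval (y + l) := by
        rw [← eval_pl f 0 (y + l), ← hq0, hs]
        simp only [Polynomial.eval_mul, Polynomial.eval_sub, Polynomial.eval_X,
          Polynomial.eval_C]
        ring
      rw [hq] at hh
      rw [eval_pl]
      simp only [Polynomial.eval_mul, Polynomial.eval_comp, Polynomial.eval_add,
        Polynomial.eval_X, Polynomial.eval_C]
      apply mul_right_cancel₀ hne
      rw [← hh]; ring
    have := eq_on_compl _ _ (-l - β) key x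
    rw [eval_pl] at this
    simp only [Polynomial.eval_mul, Polynomial.eval_comp, Polynomial.eval_add,
      Polynomial.eval_X, Polynomial.eval_C] at this
    rw [this]; ring
end

section
/- Let φ ∈ ℂ[λ] be a nonzero polynomial, let Q(∂,λ) ∈ ℂ[∂,λ], let t ∈ ℂ[λ], and let f(∂,λ) ∈ ℂ[∂,λ] satisfy f(∂,λ)φ(μ) + f(∂+λ, μ)φ(λ) − f(∂,μ)φ(λ) − f(∂+μ, λ)φ(μ) = Q(−λ−μ, λ)·t(λ+μ) for all ∂, λ, μ ∈ ℂ. Then there exist polynomials s₁, v₂, v₃ ∈ ℂ[X] such that f(∂,λ) = φ(λ)·(s₁(∂+λ) − s₁(∂)) + v₂(λ)·∂ + v₃(λ), and moreover λ·φ(λ)·v₂(μ) − μ·φ(μ)·v₂(λ) = Q(−λ−μ, λ)·t(λ+μ) for all λ, μ ∈ ℂ. -/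
open Polynomial

noncomputable def E2 (x l : ℂ) : Polynomial (Polynomial ℂ) →+* ℂ :=
  (Polynomial.evalRingHom x).comp (Polynomial.mapRingHom (Polynomial.evalRingHom l))

lemma E2_apply (x l : ℂ) (F : Polynomial (Polynomial ℂ)) :
    E2 x l F = (F.map (Polynomial.evalRingHom l)).eval x := rfl

lemma evalC_comp (l : ℂ) :
    (Polynomial.evalRingHom l).comp (Polynomial.C) = RingHom.id ℂ := by
  ext a; simp

lemma E2_C (x l : ℂ) (p : Polynomial ℂ) : E2 x l (C p) = p.eval l := by
  simp [E2_apply]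

lemma E2_X (x l : ℂ) : E2 x l X = x := by
  simp [E2_apply]

lemma E2_mapC (x l : ℂ) (s : Polynomial ℂ) : E2 x l (s.map C) = s.eval x := by
  rw [E2_apply, Polynomial.map_map, evalC_comp, Polynomial.map_id]

noncomputable def shiftS (s : Polynomial ℂ) : Polynomial (Polynomial ℂ) :=
  (s.map C).comp (X + C X)

lemma E2_shiftS (x l : ℂ) (s : Polynomial ℂ) : E2 x l (shiftS s) = s.eval (x + l) := by
  rw [E2_apply, shiftS, Polynomial.map_comp, Polynomial.eval_comp,
    Polynomial.map_map, evalC_comp, Polynomial.map_id]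
  simp

lemma shiftS_coeff (c : ℂ) (D k : ℕ) :
    (shiftS (C c * X ^ D)).coeff k = C ((D.choose k : ℂ) * c) * X ^ (D - k) := by
  rw [shiftS, C_mul_X_pow_eq_monomial, Polynomial.map_monomial, ← taylor_apply,
    taylor_coeff, hasseDeriv_monomial, eval_monomial]
  simp [Polynomial.C_mul]

noncomputable def Gp (phi s : Polynomial ℂ) : Polynomial (Polynomial ℂ) :=
  C phi * (shiftS s - s.map C)

lemma E2_Gp (x l : ℂ) (phi s : Polynomial ℂ) :
    E2 x l (Gp phi s) = phi.eval l * (s.eval (x + l) - s.eval x) := by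
  simp [Gp, E2_C, E2_shiftS, E2_mapC]

lemma hasse_eval (P : Polynomial ℂ) (n : ℕ) (hP : P.natDegree ≤ n + 1) (r : ℂ) :
    ((hasseDeriv n) P).eval r = P.coeff n + ((n : ℂ) + 1) * r * P.coeff (n + 1) := by
  have hd : ((hasseDeriv n) P).natDegree ≤ 1 :=
    le_trans (natDegree_hasseDeriv_le P n) (by omega)
  rw [eq_X_add_C_of_natDegree_le_one hd]
  rw [hasseDeriv_coeff, hasseDeriv_coeff]
  have h1 : 1 + n = n + 1 := by omega
  have h0 : 0 + n = n := by omega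
  rw [h1, h0, Nat.choose_succ_self_right, Nat.choose_self]
  simp
  ring

lemma prop_lemma (a b : Polynomial ℂ) (hb : b ≠ 0)
    (h : ∀ l m : ℂ, a.eval l * b.eval m = a.eval m * b.eval l) :
    ∃ c : ℂ, a = C c * b := by
  obtain ⟨m₀, hm₀⟩ : ∃ m₀ : ℂ, b.eval m₀ ≠ 0 := by
    by_contra hc
    push_neg at hc
    exact hb (Polynomial.funext fun r => by simp [hc r])
  refine ⟨a.eval m₀ / b.eval m₀, Polynomial.funext fun l => ?_⟩
  have h1 := h l m₀
  simp only [eval_mul, eval_C]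
  field_simp
  linear_combination h1

lemma base_case (F : Polynomial (Polynomial ℂ)) (h1 : F.natDegree ≤ 1) (phi : Polynomial ℂ) :
    ∃ s v₂ v₃ : Polynomial ℂ, ∀ x l : ℂ,
      E2 x l F = phi.eval l * (s.eval (x + l) - s.eval x) + v₂.eval l * x + v₃.eval l := by
  refine ⟨0, F.coeff 1, F.coeff 0, fun x l => ?_⟩
  conv_lhs => rw [eq_X_add_C_of_natDegree_le_one h1]
  simp [E2_C, E2_X]

lemma key (phi : Polynomial ℂ) (hphi : phi ≠ 0) (R : ℂ → ℂ → ℂ) :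
    ∀ n (F : Polynomial (Polynomial ℂ)), F.natDegree ≤ n →
    (∀ x l m : ℂ,
      phi.eval l * (E2 (x + l) m F - E2 x m F) - phi.eval m * (E2 (x + m) l F - E2 x l F)
        = R l m) →
    ∃ s v₂ v₃ : Polynomial ℂ, ∀ x l : ℂ,
      E2 x l F = phi.eval l * (s.eval (x + l) - s.eval x) + v₂.eval l * x + v₃.eval l := by
  intro n
  induction n with
  | zero => intro F hF _; exact base_case F (le_trans hF (by omega)) phi
  | succ n ih =>
    intro F hF hyp
    by_cases hFn : F.natDegree ≤ n
    · exact ih F hFn hyp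
    have hdeg : F.natDegree = n + 1 := by omega
    by_cases hn1 : n + 1 ≤ 1
    · exact base_case F (le_trans (le_of_eq hdeg) hn1) phi
    have hn : 1 ≤ n := by omega
    set a : Polynomial ℂ := F.coeff (n + 1) with ha
    have haval : ∀ l m : ℂ, (l * phi.eval l) * a.eval m = (m * phi.eval m) * a.eval l := by
      intro l m
      set Fm : Polynomial ℂ := F.map (Polynomial.evalRingHom m) with hFm
      set Fl : Polynomial ℂ := F.map (Polynomial.evalRingHom l) with hFl
      set g : Polynomial ℂ :=
        C (phi.eval l) * (Fm.comp (X + C l) - Fm) - C (phi.eval m) * (Fl.comp (X + C m) - Fl)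
        with hg
      have hgval : ∀ x : ℂ, g.eval x = R l m := by
        intro x
        have h0 := hyp x l m
        simp only [E2_apply, ← hFm, ← hFl] at h0
        rw [hg]
        simp only [eval_sub, eval_mul, eval_C, eval_comp, eval_add, eval_X]
        linear_combination h0
      have hgC : g = C (R l m) := Polynomial.funext fun x => by rw [hgval x, eval_C]
      have hco : g.coeff n = 0 := by
        rw [hgC, coeff_C, if_neg (by omega)]
      have hFmdeg : Fm.natDegree ≤ n + 1 :=
        le_trans Polynomial.natDegree_map_le (le_of_eq hdeg)
      have hFldeg : Fl.natDegree ≤ n + 1 :=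
        le_trans Polynomial.natDegree_map_le (le_of_eq hdeg)
      have hcm : Fm.comp (X + C l) = (taylor l) Fm := (taylor_apply l Fm).symm
      have hcl : Fl.comp (X + C m) = (taylor m) Fl := (taylor_apply m Fl).symm
      have hcoe : g.coeff n =
          phi.eval l * ((((taylor l) Fm).coeff n) - Fm.coeff n)
            - phi.eval m * ((((taylor m) Fl).coeff n) - Fl.coeff n) := by
        rw [hg, hcm, hcl]
        simp only [coeff_sub, coeff_C_mul]
      rw [taylor_coeff, taylor_coeff, hasse_eval Fm n hFmdeg, hasse_eval Fl n hFldeg] at hcoe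
      have hFmN : Fm.coeff (n + 1) = a.eval m := by rw [hFm, coeff_map]; rfl
      have hFlN : Fl.coeff (n + 1) = a.eval l := by rw [hFl, coeff_map]; rfl
      rw [hFmN, hFlN, hco] at hcoe
      have hcast : ((n : ℂ) + 1) ≠ 0 := by
        exact_mod_cast Nat.cast_add_one_ne_zero (R := ℂ) n
      have hz : ((n : ℂ) + 1) * ((l * phi.eval l) * a.eval m - (m * phi.eval m) * a.eval l)
          = 0 := by linear_combination -hcoe
      rcases mul_eq_zero.mp hz with h' | h'
      · exact absurd h' hcast
      · linear_combination h'
    have hb : (X : Polynomial ℂ) * phi ≠ 0 := mul_ne_zero X_ne_zero hphi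
    obtain ⟨c', hc'⟩ := prop_lemma a (X * phi) hb (fun l m => by
      have h1 := haval m l
      simp only [eval_mul, eval_X]
      linear_combination h1)
    set c : ℂ := c' / ((n : ℂ) + 1 + 1) with hc
    have hNcast : ((n : ℂ) + 1 + 1) ≠ 0 := by
      have : ((n : ℂ) + 1 + 1) = ((n + 1 : ℕ) : ℂ) + 1 := by push_cast; ring
      rw [this]
      exact_mod_cast Nat.cast_add_one_ne_zero (R := ℂ) (n + 1)
    have hcc : ((n : ℂ) + 1 + 1) * c = c' := by
      rw [hc]; field_simp
    set s₀ : Polynomial ℂ := C c * X ^ (n + 1 + 1) with hs₀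
    set G : Polynomial (Polynomial ℂ) := Gp phi s₀ with hG
    set F' : Polynomial (Polynomial ℂ) := F - G with hF'
    have hGcoeff : ∀ k, G.coeff k = phi * ((shiftS s₀).coeff k - C (s₀.coeff k)) := by
      intro k
      rw [hG, Gp, coeff_C_mul, coeff_sub, coeff_map]
    have hs₀c : ∀ k, s₀.coeff k = if n + 1 + 1 = k then c else 0 := by
      intro k
      rw [hs₀, coeff_C_mul, coeff_X_pow]
      by_cases hkk : k = n + 1 + 1
      · rw [if_pos hkk, if_pos hkk.symm, mul_one]
      · rw [if_neg hkk, if_neg (fun hh => hkk hh.symm), mul_zero]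
    have hFc : ∀ k, n + 1 ≤ k → F'.coeff k = 0 := by
      intro k hk
      rcases Nat.eq_or_lt_of_le hk with hEq | hlt
      · subst hEq
        rw [hF', coeff_sub, hGcoeff, hs₀, shiftS_coeff, hs₀c]
        rw [if_neg (by omega), show n + 1 + 1 - (n + 1) = 1 from by omega,
          Nat.choose_succ_self_right]
        have hFN : F.coeff (n + 1) = C c' * (X * phi) := by rw [← ha]; exact hc'
        rw [hFN]
        push_cast
        rw [hcc]
        simp only [map_zero, sub_zero, pow_one]
        ring
      · rw [hF', coeff_sub, hGcoeff, hs₀, shiftS_coeff, hs₀c]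
        have hF0 : F.coeff k = 0 := coeff_eq_zero_of_natDegree_lt (by omega)
        rw [hF0]
        rcases Nat.eq_or_lt_of_le hlt with hEq2 | hlt2
        · rw [← hEq2, if_pos rfl, Nat.choose_self]
          simp
        · rw [if_neg (by omega), Nat.choose_eq_zero_of_lt hlt2]
          simp
    have hF'deg : F'.natDegree ≤ n :=
      natDegree_le_iff_coeff_eq_zero.mpr (fun k hk => hFc k (by omega))
    have hE2G : ∀ y w : ℂ, E2 y w G = phi.eval w * (s₀.eval (y + w) - s₀.eval y) := by
      intro y w; rw [hG]; exact E2_Gp y w phi s₀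
    have hyp' : ∀ x l m : ℂ,
        phi.eval l * (E2 (x + l) m F' - E2 x m F')
          - phi.eval m * (E2 (x + m) l F' - E2 x l F') = R l m := by
      intro x l m
      have e3 := hE2G (x + m) l
      rw [show x + m + l = x + l + m from by ring] at e3
      rw [hF']
      simp only [map_sub]
      rw [hE2G (x + l) m, hE2G x m, e3, hE2G x l]
      linear_combination hyp x l m
    obtain ⟨s', v₂, v₃, hdec⟩ := ih F' hF'deg hyp'
    refine ⟨s' + s₀, v₂, v₃, fun x l => ?_⟩
    have hFeq : F = F' + G := by rw [hF']; ring
    rw [hFeq, map_add, hdec x l, hE2G x l]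
    simp only [eval_add]
    ring

noncomputable def Phi2 : MvPolynomial (Fin 2) ℂ →+* Polynomial (Polynomial ℂ) :=
  MvPolynomial.eval₂Hom ((Polynomial.C).comp Polynomial.C)
    ![Polynomial.X, Polynomial.C Polynomial.X]

lemma ev2_eq (f : MvPolynomial (Fin 2) ℂ) (x l : ℂ) : ev2 f x l = E2 x l (Phi2 f) := by
  have hcomp : (E2 x l).comp Phi2 = (MvPolynomial.eval ![x, l]) := by
    apply MvPolynomial.ringHom_ext
    · intro r
      simp [Phi2, E2_C]
    · intro i
      fin_cases i <;> simp [Phi2, E2_X, E2_C]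
  exact (RingHom.congr_fun hcomp f).symm

/-- if φ ≠ 0 and
f(∂,λ)φ(μ) + f(∂+λ,μ)φ(λ) − f(∂,μ)φ(λ) − f(∂+μ,λ)φ(μ) = Q(−λ−μ,λ)·t(λ+μ),
then f(∂,λ) = φ(λ)(s₁(∂+λ) − s₁(∂)) + v₂(λ)∂ + v₃(λ) for some polynomials s₁, v₂, v₃,
and λφ(λ)v₂(μ) − μφ(μ)v₂(λ) = Q(−λ−μ,λ)·t(λ+μ). -/
theorem stmt_18 (phi : Polynomial ℂ) (hphi : phi ≠ 0)
    (Q : MvPolynomial (Fin 2) ℂ) (t : Polynomial ℂ) (f : MvPolynomial (Fin 2) ℂ)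
    (h : ∀ x l m : ℂ,
      ev2 f x l * phi.eval m + ev2 f (x + l) m * phi.eval l
        - ev2 f x m * phi.eval l - ev2 f (x + m) l * phi.eval m
      = ev2 Q (-(l + m)) l * t.eval (l + m)) :
    ∃ s₁ v₂ v₃ : Polynomial ℂ,
      (∀ x l : ℂ, ev2 f x l
        = phi.eval l * (s₁.eval (x + l) - s₁.eval x) + v₂.eval l * x + v₃.eval l) ∧
      (∀ l m : ℂ, l * phi.eval l * v₂.eval m - m * phi.eval m * v₂.eval l
        = ev2 Q (-(l + m)) l * t.eval (l + m)) := by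
  set F : Polynomial (Polynomial ℂ) := Phi2 f with hFdef
  have hEf : ∀ x l : ℂ, ev2 f x l = E2 x l F := fun x l => ev2_eq f x l
  have hyp : ∀ x l m : ℂ,
      phi.eval l * (E2 (x + l) m F - E2 x m F)
        - phi.eval m * (E2 (x + m) l F - E2 x l F)
      = ev2 Q (-(l + m)) l * t.eval (l + m) := by
    intro x l m
    have h0 := h x l m
    rw [hEf x l, hEf (x + l) m, hEf x m, hEf (x + m) l] at h0
    linear_combination h0
  obtain ⟨s, v₂, v₃, hdec⟩ :=
    key phi hphi (fun l m => ev2 Q (-(l + m)) l * t.eval (l + m)) F.natDegree F le_rfl hyp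
  refine ⟨s, v₂, v₃, fun x l => by rw [hEf x l, hdec x l], ?_⟩
  intro l m
  have h0 := h 0 l m
  rw [hEf 0 l, hEf (0 + l) m, hEf 0 m, hEf (0 + m) l,
    hdec 0 l, hdec (0 + l) m, hdec 0 m, hdec (0 + m) l] at h0
  rw [show (0 : ℂ) + m + l = 0 + l + m from by ring] at h0
  linear_combination h0
end

section
/- Let α ∈ ℂ and let e ∈ ℂ be nonzero. Then there is no polynomial f(∂,λ) ∈ ℂ[∂,λ] such that f(∂,λ)·(∂ + λ + αμ) + f(∂+λ, μ)·(∂ + αλ) − f(∂,μ)·(∂ + μ + αλ) − f(∂+μ, λ)·(∂ + αμ) = (λ − μ)·f(∂, λ+μ) + e·(λ − μ) for all ∂, λ, μ ∈ ℂ. -/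
/-- for α ∈ ℂ and e ≠ 0, there is no bivariate polynomial f with
f(∂,λ)(∂+λ+αμ) + f(∂+λ,μ)(∂+αλ) − f(∂,μ)(∂+μ+αλ) − f(∂+μ,λ)(∂+αμ)
  = (λ−μ)f(∂,λ+μ) + e(λ−μ) for all ∂, λ, μ. -/
theorem stmt_19 (α e : ℂ) (he : e ≠ 0) :
    ¬ ∃ f : MvPolynomial (Fin 2) ℂ, ∀ x l m : ℂ,
      ev2 f x l * (x + l + α * m) + ev2 f (x + l) m * (x + α * l)
        - ev2 f x m * (x + m + α * l) - ev2 f (x + m) l * (x + α * m)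
      = (l - m) * ev2 f x (l + m) + e * (l - m) := by
  rintro ⟨f, hf⟩
  have h := hf (-α) 0 1
  simp only [add_zero, zero_add, mul_zero, mul_one] at h
  apply he
  have h0 : (-α : ℂ) + α = 0 := by ring
  rw [h0] at h
  linear_combination h
end
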